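/- The map ν ↦ ∑_i ν_i (1 - ln ν_i)^2 on probability vectors is Schur concave: if λ majorizes μ then ∑_i λ_i (1 - ln λ_i)^2 ≤ ∑_i μ_i (1 - ln μ_i)^2. -/

import Mathlib

/-! The function `g x = x * (1 - log x) ^ 2` has derivative `log x ^ 2 - 1`, which decreases on
`(0, 1]`, so `g` is concave on an interval containing every entry of a probability vector.
Schur concavity is then Karamata's inequality: after sorting both vectors increasingly, the prefix
sums of `l` are dominated by those of `m`, and `∑ g (m i) - g (l i) = ∑ c i * (m i - l i)` where
`c i` is the slope of `g` between `l i` and `m i`. By concavity these slopes decrease in `i`, so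
Abel summation makes the sum nonnegative. -/

/-- `l` majorizes `m`: for each `k`, the sum of the `k` largest entries of `m` is at most
the sum of the `k` largest entries of `l` (phrased via subsets of each cardinality). -/
def Majorizes {ι : Type*} [Fintype ι] (l m : ι → ℝ) : Prop :=
  ∀ A : Finset ι, ∃ B : Finset ι, B.card = A.card ∧ ∑ i ∈ A, m i ≤ ∑ i ∈ B, l i

open Finset

theorem dslope_comm {𝕜 E : Type*} [NontriviallyNormedField 𝕜] [NormedAddCommGroup E]
    [NormedSpace 𝕜 E] (f : 𝕜 → E) (a b : 𝕜) : dslope f a b = dslope f b a := by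
  rcases eq_or_ne b a with rfl | hne
  · rfl
  · rw [dslope_of_ne f hne, dslope_of_ne f hne.symm, slope_comm]

theorem Fin.sum_mul_nonneg_of_antitone_of_nonneg :
    ∀ {n : ℕ} {c x : Fin n → ℝ}, Antitone c → (∀ i, 0 ≤ c i) →
      (∀ j, 0 ≤ ∑ i ∈ Iic j, x i) → 0 ≤ ∑ i, c i * x i
  | 0, _, _, _, _, _ => by simp
  | n + 1, c, x, hc, hc0, hx => by
    have hshift : ∑ i, c i * x i
        = ∑ i : Fin n, (c i.castSucc - c (last n)) * x i.castSucc
          + c (last n) * ∑ i, x i := by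
      rw [mul_sum, Fin.sum_univ_castSucc (fun i => c i * x i),
        Fin.sum_univ_castSucc (fun i => c (last n) * x i)]
      simp only [sub_mul, sum_sub_distrib]
      ring
    have hprefix (j : Fin n) : 0 ≤ ∑ i ∈ Iic j, x i.castSucc := by
      simpa [← Fin.map_castSuccEmb_Iic, sum_map] using hx j.castSucc
    have hhead := Fin.sum_mul_nonneg_of_antitone_of_nonneg
      (c := fun i => c i.castSucc - c (last n)) (x := fun i => x i.castSucc)
      (fun i j hij => sub_le_sub_right (hc (Fin.castSucc_le_castSucc_iff.mpr hij)) _)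
      (fun i => sub_nonneg.mpr (hc (Fin.le_last _))) hprefix
    have htotal : 0 ≤ ∑ i, x i := by simpa [← Fin.top_eq_last] using hx (last n)
    rw [hshift]
    exact add_nonneg hhead (mul_nonneg (hc0 _) htotal)

theorem Fin.sum_mul_nonneg_of_antitone_of_sum_eq_zero {n : ℕ} {c x : Fin n → ℝ}
    (hc : Antitone c) (hx : ∀ j, 0 ≤ ∑ i ∈ Iic j, x i) (hx0 : ∑ i, x i = 0) :
    0 ≤ ∑ i, c i * x i := by
  cases n with
  | zero => simp
  | succ n =>
    have hshift : ∑ i, c i * x i = ∑ i, (c i - c (last n)) * x i := by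
      simp only [sub_mul, sum_sub_distrib, ← mul_sum, hx0, mul_zero, sub_zero]
    rw [hshift]
    exact Fin.sum_mul_nonneg_of_antitone_of_nonneg (fun i j hij => sub_le_sub_right (hc hij) _)
      (fun i => sub_nonneg.mpr (hc (Fin.le_last i))) hx

section Concave

variable {s : Set ℝ} {f : ℝ → ℝ}

theorem ConcaveOn.antitoneOn_dslope (hf : ConcaveOn ℝ s f)
    (hfd : ∀ x ∈ s, DifferentiableAt ℝ f x) {x : ℝ} (hx : x ∈ s) :
    AntitoneOn (dslope f x) s := by
  intro y₁ hy₁ y₂ hy₂ hy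
  rcases hy.eq_or_lt with rfl | hlt
  · rfl
  rcases eq_or_ne y₁ x with rfl | h₁
  · rw [dslope_same, dslope_of_ne f hlt.ne']
    exact hf.slope_le_deriv hy₁ hy₂ hlt (hfd y₁ hy₁)
  rcases eq_or_ne y₂ x with rfl | h₂
  · rw [dslope_same, dslope_of_ne f h₁, slope_comm]
    exact hf.deriv_le_slope hy₁ hy₂ hlt (hfd y₂ hy₂)
  rw [dslope_of_ne f h₁, dslope_of_ne f h₂]
  exact hf.slope_anti hx ⟨hy₁, h₁⟩ ⟨hy₂, h₂⟩ hy

theorem ConcaveOn.dslope_anti (hf : ConcaveOn ℝ s f) (hfd : ∀ x ∈ s, DifferentiableAt ℝ f x)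
    {x x' y y' : ℝ} (hx : x ∈ s) (hx' : x' ∈ s) (hy : y ∈ s) (hy' : y' ∈ s)
    (hxx' : x ≤ x') (hyy' : y ≤ y') : dslope f x' y' ≤ dslope f x y :=
  calc dslope f x' y' ≤ dslope f x' y := hf.antitoneOn_dslope hfd hx' hy hy' hyy'
    _ = dslope f y x' := dslope_comm f x' y
    _ ≤ dslope f y x := hf.antitoneOn_dslope hfd hy hx hx' hxx'
    _ = dslope f x y := dslope_comm f y x

theorem ConcaveOn.karamata (hf : ConcaveOn ℝ s f)
    (hfd : ∀ x ∈ s, DifferentiableAt ℝ f x) {n : ℕ} {a b : Fin n → ℝ}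
    (ha : Monotone a) (hb : Monotone b) (has : ∀ i, a i ∈ s) (hbs : ∀ i, b i ∈ s)
    (hab : ∀ j, ∑ i ∈ Iic j, a i ≤ ∑ i ∈ Iic j, b i) (hsum : ∑ i, a i = ∑ i, b i) :
    ∑ i, f (a i) ≤ ∑ i, f (b i) := by
  have hdiff : ∑ i, f (b i) - ∑ i, f (a i) = ∑ i, dslope f (a i) (b i) * (b i - a i) := by
    rw [← sum_sub_distrib]
    exact sum_congr rfl fun i _ => by rw [← sub_smul_dslope f, smul_eq_mul, mul_comm]
  have hnonneg := Fin.sum_mul_nonneg_of_antitone_of_sum_eq_zero (x := fun i => b i - a i)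
    (fun i j hij => hf.dslope_anti hfd (has i) (has j) (hbs i) (hbs j) (ha hij) (hb hij))
    (fun j => by simpa only [sum_sub_distrib, sub_nonneg] using hab j)
    (by rw [sum_sub_distrib, hsum, sub_self])
  linarith

end Concave

theorem Finset.sum_le_sum_of_card_eq_of_forall_le {ι : Type*} [DecidableEq ι] {a : ι → ℝ}
    {B T : Finset ι} (hcard : #B = #T) (hle : ∀ i ∈ B \ T, ∀ j ∈ T \ B, a i ≤ a j) :
    ∑ i ∈ B, a i ≤ ∑ i ∈ T, a i := by
  have hsdiff : ∑ i ∈ B \ T, a i ≤ ∑ i ∈ T \ B, a i := by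
    rcases (T \ B).eq_empty_or_nonempty with hTB | hTB
    · have hBT : B \ T = ∅ := by rw [← card_eq_zero, card_sdiff_comm hcard, hTB, card_empty]
      simp [hBT, hTB]
    · calc ∑ i ∈ B \ T, a i ≤ #(B \ T) • (T \ B).inf' hTB a :=
            sum_le_card_nsmul _ _ _ fun i hi => le_inf' hTB _ (hle i hi)
        _ = #(T \ B) • (T \ B).inf' hTB a := by rw [card_sdiff_comm hcard]
        _ ≤ ∑ i ∈ T \ B, a i := card_nsmul_le_sum _ _ _ fun j hj => inf'_le a hj
  rw [← sum_inter_add_sum_sdiff B T, ← sum_inter_add_sum_sdiff T B, inter_comm]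
  gcongr

namespace Majorizes

variable {n : ℕ} {l m : Fin n → ℝ}

theorem sum_le_sum_Ioi_comp (h : Majorizes l m) {σ : Equiv.Perm (Fin n)}
    (hσ : Monotone (l ∘ σ)) {A : Finset (Fin n)} (j : Fin n) (hA : #A = #(Ioi j)) :
    ∑ i ∈ A, m i ≤ ∑ i ∈ Ioi j, l (σ i) := by
  obtain ⟨B, hBcard, hB⟩ := h A
  have hBσ : ∑ i ∈ B, l i = ∑ i ∈ B.map σ.symm.toEmbedding, l (σ i) := by simp [sum_map]
  refine hB.trans (hBσ ▸ sum_le_sum_of_card_eq_of_forall_le (by simpa [hA] using hBcard) ?_)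
  intro i hi k hk
  simp only [mem_sdiff, mem_Ioi, not_lt] at hi hk
  exact hσ (hi.2.trans hk.1.le)

theorem sum_Iic_sort_le (h : Majorizes l m)
    (hsum : ∑ i, l i = ∑ i, m i) (j : Fin n) :
    ∑ i ∈ Iic j, l (Tuple.sort l i) ≤ ∑ i ∈ Iic j, m (Tuple.sort m i) := by
  have htail : ∑ i ∈ Ioi j, m (Tuple.sort m i) ≤ ∑ i ∈ Ioi j, l (Tuple.sort l i) := by
    simpa [sum_map] using h.sum_le_sum_Ioi_comp (Tuple.monotone_sort l)
      (A := (Ioi j).map (Tuple.sort m).toEmbedding) j (by simp)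
  have hsplit (v : Fin n → ℝ) (σ : Equiv.Perm (Fin n)) :
      ∑ i ∈ Iic j, v (σ i) + ∑ i ∈ Ioi j, v (σ i) = ∑ i, v i := by
    have hcompl : (Iic j)ᶜ = Ioi j := by ext; simp
    rw [← hcompl, sum_add_sum_compl, Equiv.sum_comp σ v]
  linarith [hsplit l (Tuple.sort l), hsplit m (Tuple.sort m)]

end Majorizes

theorem mem_Ioc_of_sum_eq_one {ι : Type*} [Fintype ι] {p : ι → ℝ} (hp : ∀ i, 0 < p i)
    (hp1 : ∑ i, p i = 1) (i : ι) : p i ∈ Set.Ioc 0 1 :=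
  ⟨hp i, hp1 ▸ single_le_sum (fun j _ => (hp j).le) (mem_univ i)⟩

theorem hasDerivAt_mul_one_sub_log_sq {x : ℝ} (hx : 0 < x) :
    HasDerivAt (fun y => y * (1 - Real.log y) ^ 2) (Real.log x ^ 2 - 1) x := by
  have h := (hasDerivAt_id x).mul (((Real.hasDerivAt_log hx.ne').const_sub 1).pow 2)
  refine h.congr_deriv ?_
  simp only [id, Pi.pow_apply]
  field_simp
  ring

theorem concaveOn_mul_one_sub_log_sq :
    ConcaveOn ℝ (Set.Ioc 0 1) (fun x => x * (1 - Real.log x) ^ 2) := by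
  have hderiv {x : ℝ} (hx : 0 < x) := hasDerivAt_mul_one_sub_log_sq hx
  refine AntitoneOn.concaveOn_of_deriv (convex_Ioc 0 1)
    (fun x hx => (hderiv hx.1).continuousAt.continuousWithinAt) ?_ ?_ <;> rw [interior_Ioc]
  · exact fun x hx => (hderiv hx.1).differentiableAt.differentiableWithinAt
  · intro x hx y hy hxy
    rw [(hderiv hx.1).deriv, (hderiv hy.1).deriv]
    have hlog : Real.log x ≤ Real.log y := Real.log_le_log hx.1 hxy
    have hlog0 : Real.log y ≤ 0 := Real.log_nonpos hy.1.le hy.2.le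
    nlinarith

/-- Schur concavity of `ν ↦ ∑ ν_i (1 - ln ν_i)^2`: if the probability vector `l`
majorizes `m`, then `∑ l_i (1 - ln l_i)^2 ≤ ∑ m_i (1 - ln m_i)^2`. -/
theorem schur_concave_M2 {d : ℕ} (l m : Fin d → ℝ)
    (hl0 : ∀ i, 0 < l i) (hl1 : ∑ i, l i = 1)
    (hm0 : ∀ i, 0 < m i) (hm1 : ∑ i, m i = 1)
    (hmaj : Majorizes l m) :
    ∑ i, l i * (1 - Real.log (l i)) ^ 2 ≤ ∑ i, m i * (1 - Real.log (m i)) ^ 2 := by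
  have hkaramata := concaveOn_mul_one_sub_log_sq.karamata
    (fun x hx => (hasDerivAt_mul_one_sub_log_sq hx.1).differentiableAt)
    (Tuple.monotone_sort l) (Tuple.monotone_sort m)
    (fun i => mem_Ioc_of_sum_eq_one hl0 hl1 _) (fun i => mem_Ioc_of_sum_eq_one hm0 hm1 _)
    (hmaj.sum_Iic_sort_le (hl1.trans hm1.symm))
    (by simp only [Function.comp_apply, Equiv.sum_comp, hl1, hm1])
  simpa only [Function.comp_apply,
    Equiv.sum_comp (Tuple.sort l) fun i => l i * (1 - Real.log (l i)) ^ 2,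
    Equiv.sum_comp (Tuple.sort m) fun i => m i * (1 - Real.log (m i)) ^ 2] using hkaramata
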